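/- arXiv:2302.12092 — 3 statements merged into one kernel-verified Lean document; each statement's English description precedes it below -/
import Mathlib

section
/- Let m > 0, let p ≥ 1 be an integer, and let W₀, W₁ be real numbers with 1 < W₀ ≤ W₁ and W₁² < m + 2. Set θ(p) = (π·(2p+1 choose p)/4^p)². Then there exists a constant C > 0 (depending only on m and p) such that for every ρ ∈ (0,1), every ω ∈ [W₀, W₁], every α ≥ (W₀^(2p)·θ(p)/4)·ρ^(2p), every positive integer K, and every pair (n,k) with n ∈ ℤ, k ∈ ℕ and k > K, one has n²/|ϑ(n,k)|² ≤ max{4, C/(K⁴·ρ^(4p))} and k²/|ϑ(n,k)|² ≤ max{4, C/(K⁴·ρ^(4p))}, where |ϑ(n,k)|² = (k² + m − ω²·n²)² + ω²·α²·n²·k⁴. -/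
set_option maxHeartbeats 1000000 in
theorem inverse_bound_high_frequencies
    (m : ℝ) (hm : 0 < m) (p : ℕ) (hp : 1 ≤ p) (W0 W1 : ℝ)
    (hW0 : 1 < W0) (hW01 : W0 ≤ W1) (hW1 : W1^2 < m + 2) :
    ∃ C > (0:ℝ), ∀ ρ : ℝ, 0 < ρ → ρ < 1 → ∀ ω ∈ Set.Icc W0 W1, ∀ α : ℝ,
      (W0^(2*p) * (Real.pi * (Nat.choose (2*p+1) p : ℝ) / 4^p)^2 / 4) * ρ^(2*p) ≤ α →
      ∀ K : ℕ, 1 ≤ K → ∀ n : ℤ, ∀ k : ℕ, K < k →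
        (n:ℝ)^2 / (((k:ℝ)^2 + m - ω^2 * (n:ℝ)^2)^2 + ω^2 * α^2 * (n:ℝ)^2 * (k:ℝ)^4)
            ≤ max 4 (C / ((K:ℝ)^4 * ρ^(4*p))) ∧
        (k:ℝ)^2 / (((k:ℝ)^2 + m - ω^2 * (n:ℝ)^2)^2 + ω^2 * α^2 * (n:ℝ)^2 * (k:ℝ)^4)
            ≤ max 4 (C / ((K:ℝ)^4 * ρ^(4*p))) := by
  have hchoose : (0:ℝ) < (Nat.choose (2*p+1) p : ℝ) := by
    exact_mod_cast Nat.choose_pos (by omega)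
  have hpi := Real.pi_pos
  have hW0pos : (0:ℝ) < W0 := by linarith
  obtain ⟨c, hcpos, hceq⟩ :
      ∃ c : ℝ, 0 < c ∧
        c = W0^(2*p) * (Real.pi * (Nat.choose (2*p+1) p : ℝ) / 4^p)^2 / 4 :=
    ⟨_, by positivity, rfl⟩
  refine ⟨2 / c^2, by positivity, ?_⟩
  intro ρ hρ0 hρ1 ω hω α hα K hK n k hKk
  rw [← hceq] at hα
  clear hceq hchoose hpi
  obtain ⟨hω1, hω2⟩ := hω
  have hω1' : (1:ℝ) ≤ ω := by linarith
  have hωpos : (0:ℝ) < ω := by linarith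
  have hω2' : (1:ℝ) ≤ ω^2 := by nlinarith
  have hαpos : 0 < α := lt_of_lt_of_le (by positivity) hα
  have hK1 : (1:ℝ) ≤ (K:ℝ) := by exact_mod_cast hK
  have hkK : (K:ℝ) < (k:ℝ) := by exact_mod_cast hKk
  have hk2 : (2:ℝ) ≤ (k:ℝ) := by
    have : 2 ≤ k := by omega
    exact_mod_cast this
  have hK4 : (K:ℝ)^4 ≤ (k:ℝ)^4 := by
    apply pow_le_pow_left₀ (by linarith) hkK.le
  have hρ4 : ρ^(4*p) = (ρ^(2*p))^2 := by
    rw [← pow_mul]; ring_nf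
  have hα2 : c^2 * ρ^(4*p) ≤ α^2 := by
    rw [hρ4, ← mul_pow]
    apply pow_le_pow_left₀ (by positivity) hα
  have hρ4pos : 0 < ρ^(4*p) := by positivity
  set D := (((k:ℝ)^2 + m - ω^2 * (n:ℝ)^2)^2 + ω^2 * α^2 * (n:ℝ)^2 * (k:ℝ)^4) with hD
  have hx4 : (4:ℝ) ≤ (k:ℝ)^2 + m := by nlinarith
  by_cases hcase : ω^2 * (n:ℝ)^2 ≤ ((k:ℝ)^2 + m)/2
  · -- low temporal frequency: first term dominates
    have hDlow : (((k:ℝ)^2 + m)/2)^2 ≤ D := by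
      have h1 : ((k:ℝ)^2 + m)/2 ≤ (k:ℝ)^2 + m - ω^2 * (n:ℝ)^2 := by linarith
      have h2 : (0:ℝ) ≤ ω^2 * α^2 * (n:ℝ)^2 * (k:ℝ)^4 := by positivity
      nlinarith [sq_nonneg ((k:ℝ)^2 + m - ω^2 * (n:ℝ)^2)]
    have hDpos : 0 < D := lt_of_lt_of_le (by positivity) hDlow
    have hn2 : (n:ℝ)^2 ≤ ((k:ℝ)^2 + m)/2 := by
      nlinarith [mul_le_mul_of_nonneg_left hω2' (sq_nonneg (n:ℝ))]
    have hxx : ((k:ℝ)^2 + m) * 4 ≤ ((k:ℝ)^2 + m) * ((k:ℝ)^2 + m) :=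
      mul_le_mul_of_nonneg_left hx4 (by linarith)
    constructor
    · refine le_trans ?_ (le_max_left _ _)
      rw [div_le_iff₀ hDpos]
      nlinarith [hDlow, hn2, hxx]
    · refine le_trans ?_ (le_max_left _ _)
      rw [div_le_iff₀ hDpos]
      nlinarith [hDlow, hxx]
  · -- high temporal frequency: damping term dominates
    push_neg at hcase
    have hn2 : 0 < (n:ℝ)^2 := by
      rcases eq_or_ne n 0 with h | h
      · exfalso; rw [h] at hcase; push_cast at hcase; nlinarith
      · have : (n:ℝ) ≠ 0 := Int.cast_ne_zero.mpr h
        positivity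
    have hDdamp : ω^2 * α^2 * (n:ℝ)^2 * (k:ℝ)^4 ≤ D := by
      have := sq_nonneg ((k:ℝ)^2 + m - ω^2 * (n:ℝ)^2)
      rw [hD]; linarith
    have hDpos : 0 < D := lt_of_lt_of_le (by positivity) hDdamp
    have hc2pos : (0:ℝ) < c^2 := by positivity
    have hKρpos : (0:ℝ) < (K:ℝ)^4 * ρ^(4*p) := by positivity
    constructor
    · refine le_trans ?_ (le_max_right _ _)
      rw [div_le_div_iff₀ hDpos hKρpos]
      have h2 : 2 / c^2 * D = (2 * D) / c^2 := by ring
      rw [h2, le_div_iff₀ hc2pos]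
      -- goal: n^2 * (K^4 * ρ^(4p)) * c^2 ≤ 2 * D
      have step1 : (n:ℝ)^2 * ((K:ℝ)^4 * ρ^(4*p)) * c^2 ≤ (n:ℝ)^2 * (K:ℝ)^4 * α^2 := by
        linarith [mul_le_mul_of_nonneg_left hα2
          (show (0:ℝ) ≤ (n:ℝ)^2 * (K:ℝ)^4 by positivity)]
      have step2 : (n:ℝ)^2 * (K:ℝ)^4 * α^2 ≤ (n:ℝ)^2 * (k:ℝ)^4 * α^2 := by
        linarith [mul_le_mul_of_nonneg_left hK4
          (show (0:ℝ) ≤ (n:ℝ)^2 * α^2 by positivity)]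
      have step3 : (n:ℝ)^2 * (k:ℝ)^4 * α^2 ≤ D := by
        have h1 := mul_le_mul_of_nonneg_right hω2'
          (show (0:ℝ) ≤ α^2 * (n:ℝ)^2 * (k:ℝ)^4 by positivity)
        have h2 := sq_nonneg ((k:ℝ)^2 + m - ω^2 * (n:ℝ)^2)
        rw [hD]; linarith
      linarith
    · refine le_trans ?_ (le_max_right _ _)
      rw [div_le_div_iff₀ hDpos hKρpos]
      have h2 : 2 / c^2 * D = (2 * D) / c^2 := by ring
      rw [h2, le_div_iff₀ hc2pos]
      -- goal: k^2 * (K^4 * ρ^(4p)) * c^2 ≤ 2 * D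
      have step1 : (k:ℝ)^2 * ((K:ℝ)^4 * ρ^(4*p)) * c^2 ≤ (k:ℝ)^2 * (K:ℝ)^4 * α^2 := by
        linarith [mul_le_mul_of_nonneg_left hα2
          (show (0:ℝ) ≤ (k:ℝ)^2 * (K:ℝ)^4 by positivity)]
      have step2 : (k:ℝ)^2 * (K:ℝ)^4 * α^2 ≤ (k:ℝ)^2 * (k:ℝ)^4 * α^2 := by
        linarith [mul_le_mul_of_nonneg_left hK4
          (show (0:ℝ) ≤ (k:ℝ)^2 * α^2 by positivity)]
      have step3 : (k:ℝ)^2 * (k:ℝ)^4 * α^2 ≤ 2 * D := by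
        have hd : ((k:ℝ)^2 + m)/2 * (α^2 * (k:ℝ)^4) ≤ ω^2 * (n:ℝ)^2 * (α^2 * (k:ℝ)^4) :=
          mul_le_mul_of_nonneg_right hcase.le (by positivity)
        have h1 := sq_nonneg ((k:ℝ)^2 + m - ω^2 * (n:ℝ)^2)
        have h2 := mul_nonneg (mul_nonneg hm.le (sq_nonneg α))
          (pow_nonneg (by linarith : (0:ℝ) ≤ (k:ℝ)) 4)
        rw [hD]; nlinarith [hd]
      linarith
end

section
/- Let m > 0, let p ≥ 1 be an integer, and let W₀, W₁ be real numbers with 1 < W₀ ≤ W₁ and W₁² < m + 2. Set θ(p) = (π·(2p+1 choose p)/4^p)². Then there exist ρ₀ ∈ (0,1] and a constant C > 0 (depending only on m and p) such that for every ρ ∈ (0, ρ₀), every ω ∈ [W₀, W₁], every α ≥ (W₀^(2p)·θ(p)/4)·ρ^(2p), and every pair (n,k) with n ∈ ℤ, k ∈ ℕ, k ≥ 1 and (n,k) ∉ {(1,1), (−1,1)}, one has n²/|ϑ(n,k)|² ≤ C/ρ^(4p) and k²/|ϑ(n,k)|² ≤ C/ρ^(4p), where |ϑ(n,k)|² = (k²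 + m − ω²·n²)² + ω²·α²·n²·k⁴. -/
set_option maxHeartbeats 4000000 in
theorem inverse_bound_all_nonresonant_frequencies
    (m : ℝ) (hm : 0 < m) (p : ℕ) (hp : 1 ≤ p) (W0 W1 : ℝ)
    (hW0 : 1 < W0) (hW01 : W0 ≤ W1) (hW1 : W1^2 < m + 2) :
    ∃ ρ₀ : ℝ, 0 < ρ₀ ∧ ρ₀ ≤ 1 ∧ ∃ C > (0:ℝ), ∀ ρ : ℝ, 0 < ρ → ρ < ρ₀ →
      ∀ ω ∈ Set.Icc W0 W1, ∀ α : ℝ,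
      (W0^(2*p) * (Real.pi * (Nat.choose (2*p+1) p : ℝ) / 4^p)^2 / 4) * ρ^(2*p) ≤ α →
      ∀ n : ℤ, ∀ k : ℕ, 1 ≤ k → ¬((n = 1 ∧ k = 1) ∨ (n = -1 ∧ k = 1)) →
        (n:ℝ)^2 / (((k:ℝ)^2 + m - ω^2 * (n:ℝ)^2)^2 + ω^2 * α^2 * (n:ℝ)^2 * (k:ℝ)^4)
            ≤ C / ρ^(4*p) ∧
        (k:ℝ)^2 / (((k:ℝ)^2 + m - ω^2 * (n:ℝ)^2)^2 + ω^2 * α^2 * (n:ℝ)^2 * (k:ℝ)^4)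
            ≤ C / ρ^(4*p) := by
  have hW0pos : (0:ℝ) < W0 := lt_trans one_pos hW0
  have hch : (0:ℝ) < (Nat.choose (2*p+1) p : ℝ) := by
    exact_mod_cast Nat.choose_pos (by omega)
  set c : ℝ := W0^(2*p) * (Real.pi * (Nat.choose (2*p+1) p : ℝ) / 4^p)^2 / 4 with hc
  have hcpos : 0 < c := by
    apply div_pos _ (by norm_num)
    apply mul_pos (pow_pos hW0pos _)
    apply pow_pos
    apply div_pos (mul_pos Real.pi_pos hch) (by positivity)
  set C : ℝ := (4 + 2*m) * (1 + 1/c^2) with hC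
  have hCpos : 0 < C := by positivity
  have hCc : C * c^2 = (4 + 2*m) * (c^2 + 1) := by
    rw [hC]
    field_simp
  have hC4 : 4 ≤ C := by
    have h1 : 0 ≤ 1/c^2 := by positivity
    nlinarith
  refine ⟨1, one_pos, le_refl 1, C, hCpos, ?_⟩
  intro ρ hρ hρ1 ω hω α hα n k hk _
  obtain ⟨hωW0, hωW1⟩ := hω
  have hω1 : (1:ℝ) ≤ ω := le_trans hW0.le hωW0
  have hω2 : (1:ℝ) ≤ ω^2 := by nlinarith
  have hωpos : (0:ℝ) < ω := lt_of_lt_of_le one_pos hω1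
  have hK : (1:ℝ) ≤ (k:ℝ) := by exact_mod_cast hk
  have hK2 : (1:ℝ) ≤ (k:ℝ)^2 := by nlinarith
  have hK4 : (1:ℝ) ≤ (k:ℝ)^4 := by nlinarith
  have hK24 : (k:ℝ)^2 ≤ (k:ℝ)^4 := by nlinarith
  have hRpos : 0 < ρ^(4*p) := pow_pos hρ _
  have hR1 : ρ^(4*p) ≤ 1 := pow_le_one₀ hρ.le hρ1.le
  have hαpos : 0 < α := lt_of_lt_of_le (mul_pos hcpos (pow_pos hρ _)) hα
  have hα2 : c^2 * ρ^(4*p) ≤ α^2 := by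
    have h1 : (c * ρ^(2*p))^2 ≤ α^2 :=
      pow_le_pow_left₀ (by positivity) hα 2
    calc c^2 * ρ^(4*p) = (c * ρ^(2*p))^2 := by
          rw [mul_pow, ← pow_mul]
          ring_nf
      _ ≤ α^2 := h1
  clear hα hc hC
  clear_value c C
  rcases eq_or_ne n 0 with hn0 | hn0
  · -- n = 0
    subst hn0
    push_cast
    have heq : ((k:ℝ)^2 + m - ω^2 * (0:ℝ)^2)^2 + ω^2 * α^2 * (0:ℝ)^2 * (k:ℝ)^4
        = ((k:ℝ)^2 + m)^2 := by ring
    rw [heq]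
    have hD0 : (0:ℝ) < ((k:ℝ)^2 + m)^2 := by positivity
    constructor
    · rw [div_le_div_iff₀ hD0 hRpos]
      nlinarith [mul_pos hCpos hD0]
    · rw [div_le_div_iff₀ hD0 hRpos]
      nlinarith [hK2, hR1, hRpos, hC4, hm, mul_pos hCpos hD0, sq_nonneg ((k:ℝ)^2 + m - 1)]
  · -- n ≠ 0
    have hn1 : (1:ℝ) ≤ (n:ℝ)^2 := by
      rcases hn0.lt_or_gt with h | h
      · have h' : (n:ℝ) ≤ -1 := by exact_mod_cast (by omega : n ≤ -1)
        nlinarith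
      · have h' : (1:ℝ) ≤ (n:ℝ) := by exact_mod_cast h
        nlinarith
    have hterm : 0 < ω^2 * α^2 * (n:ℝ)^2 * (k:ℝ)^4 := by
      apply mul_pos (mul_pos (mul_pos (pow_pos hωpos 2) (pow_pos hαpos 2)) _)
        (by positivity)
      nlinarith
    have hD : (0:ℝ) < ((k:ℝ)^2 + m - ω^2 * (n:ℝ)^2)^2 + ω^2 * α^2 * (n:ℝ)^2 * (k:ℝ)^4 :=
      lt_of_lt_of_le hterm (le_add_of_nonneg_left (sq_nonneg _))
    have hterm2 : c^2 * ρ^(4*p) * (k:ℝ)^4 ≤ ω^2 * α^2 * (n:ℝ)^2 * (k:ℝ)^4 := by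
      have h1 : c^2 * ρ^(4*p) ≤ ω^2 * α^2 * (n:ℝ)^2 := by
        nlinarith [sq_nonneg α, sq_nonneg (ω*α)]
      nlinarith [pow_pos (lt_of_lt_of_le one_pos hK) 4]
    rcases le_or_gt (2 * ((k:ℝ)^2 + m)) (ω^2 * (n:ℝ)^2) with hfar | hnear
    · -- far from resonance: first term dominates
      have hgap : (k:ℝ)^2 + m ≤ ω^2 * (n:ℝ)^2 - ((k:ℝ)^2 + m) := by linarith
      have hgap0 : (0:ℝ) ≤ ω^2 * (n:ℝ)^2 - ((k:ℝ)^2 + m) := by nlinarith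
      have hsq : ((k:ℝ)^2 + m)^2 ≤ ((k:ℝ)^2 + m - ω^2 * (n:ℝ)^2)^2 := by
        nlinarith
      have hω4 : (1:ℝ) ≤ (ω^2)^2 := by nlinarith
      have hCD : 4 * (((k:ℝ)^2 + m - ω^2 * (n:ℝ)^2)^2 + ω^2 * α^2 * (n:ℝ)^2 * (k:ℝ)^4)
          ≤ C * (((k:ℝ)^2 + m - ω^2 * (n:ℝ)^2)^2 + ω^2 * α^2 * (n:ℝ)^2 * (k:ℝ)^4) :=
        mul_le_mul_of_nonneg_right hC4 hD.le
      constructor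
      · rw [div_le_div_iff₀ hD hRpos]
        have e1 : (n:ℝ)^2 * ρ^(4*p) ≤ (n:ℝ)^2 := by nlinarith
        have e2 : (n:ℝ)^2 ≤ ((n:ℝ)^2)^2 := by nlinarith
        have e3 : ((n:ℝ)^2)^2 ≤ (ω^2)^2 * ((n:ℝ)^2)^2 := by
          nlinarith [sq_nonneg ((n:ℝ)^2)]
        have e4 : (ω^2)^2 * ((n:ℝ)^2)^2 ≤ 4 * ((k:ℝ)^2 + m - ω^2 * (n:ℝ)^2)^2 := by
          nlinarith [hgap, hgap0, sq_nonneg (ω^2 * (n:ℝ)^2 - 2*((k:ℝ)^2+m))]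
        linarith [hterm.le]
      · rw [div_le_div_iff₀ hD hRpos]
        have e1 : (k:ℝ)^2 * ρ^(4*p) ≤ (k:ℝ)^2 := by nlinarith
        have e2 : (k:ℝ)^2 ≤ ((k:ℝ)^2 + m)^2 := by nlinarith
        linarith [hterm.le, hsq]
    · -- near resonance: damping term dominates
      have hnsmall : (n:ℝ)^2 ≤ 2 * ((k:ℝ)^2 + m) := by nlinarith
      constructor
      · rw [div_le_div_iff₀ hD hRpos]
        have key : (n:ℝ)^2 * ρ^(4*p) ≤ C * (c^2 * ρ^(4*p) * (k:ℝ)^4) := by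
          have h1 : (n:ℝ)^2 * ρ^(4*p) ≤ (2*(k:ℝ)^2 + 2*m) * ρ^(4*p) := by nlinarith
          have h2' : 2*(k:ℝ)^2 + 2*m ≤ (4 + 2*m) * (k:ℝ)^4 := by nlinarith
          have h2 : (2*(k:ℝ)^2 + 2*m) * ρ^(4*p) ≤ (4 + 2*m) * (k:ℝ)^4 * ρ^(4*p) :=
            mul_le_mul_of_nonneg_right h2' hRpos.le
          have h3 : (4 + 2*m) * (k:ℝ)^4 * ρ^(4*p) ≤ C * (c^2 * ρ^(4*p) * (k:ℝ)^4) := by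
            have : (4+2*m) ≤ C * c^2 := by
              nlinarith [hCc, mul_nonneg (by linarith : (0:ℝ) ≤ 4+2*m) (sq_nonneg c)]
            nlinarith [mul_pos hRpos (pow_pos (lt_of_lt_of_le one_pos hK) 4)]
          linarith
        linarith [mul_le_mul_of_nonneg_left hterm2 hCpos.le,
          mul_nonneg hCpos.le (sq_nonneg ((k:ℝ)^2 + m - ω^2*(n:ℝ)^2))]
      · rw [div_le_div_iff₀ hD hRpos]
        have key : (k:ℝ)^2 * ρ^(4*p) ≤ C * (c^2 * ρ^(4*p) * (k:ℝ)^4) := by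
          have h3 : 1 ≤ C * c^2 := by
            nlinarith [hCc, mul_nonneg (by linarith : (0:ℝ) ≤ 4+2*m) (sq_nonneg c), hm]
          nlinarith [mul_pos hRpos (pow_pos (lt_of_lt_of_le one_pos hK) 2),
            mul_pos hRpos (pow_pos (lt_of_lt_of_le one_pos hK) 4)]
        linarith [mul_le_mul_of_nonneg_left hterm2 hCpos.le,
          mul_nonneg hCpos.le (sq_nonneg ((k:ℝ)^2 + m - ω^2*(n:ℝ)^2))]
end

section
/- Let m > 0 be an irrational real number, let p ≥ 1 be an integer, and let K > 2p + 1 be a positive integer. Then there exist ε > 0 and a constant C > 0 (depending only on K, m, p) such that for every real ω with ω² > 1 and |ω² − (1 + m)| < ε, and every pair (n,k) with n ∈ ℤ, k ∈ ℕ, 1 ≤ k ≤ K and (n,k) ∉ {(1,1), (−1,1)}, the denominator k² + m − ω²·n² is nonzero and n²/(k² + m − ω²·n²)² ≤ C and k²/(k² + m − ω²·n²)² ≤ C. -/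
set_option maxHeartbeats 4000000

/-- If `x ≤ B`, `0 ≤ x` and `c ≤ |D|` with `0 < c`, then `x / D^2 ≤ B / c^2`. -/
lemma aux_div_sq_le {x B c D : ℝ} (hx : 0 ≤ x) (hxB : x ≤ B) (hc : 0 < c)
    (hD : c ≤ |D|) : x / D^2 ≤ B / c^2 := by
  have hD2 : c^2 ≤ D^2 := by nlinarith [sq_abs D, abs_nonneg D]
  exact div_le_div₀ (hx.trans hxB) hxB (by positivity) hD2

theorem undamped_small_divisor_bound_low_spatial_frequencies
    (m : ℝ) (hm : 0 < m) (hmi : Irrational m) (p : ℕ) (hp : 1 ≤ p)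
    (K : ℕ) (hK : 2*p + 1 < K) :
    ∃ ε > (0:ℝ), ∃ C > (0:ℝ), ∀ ω : ℝ, 1 < ω^2 → |ω^2 - (1 + m)| < ε →
      ∀ n : ℤ, ∀ k : ℕ, 1 ≤ k → k ≤ K → ¬((n = 1 ∧ k = 1) ∨ (n = -1 ∧ k = 1)) →
        (k:ℝ)^2 + m - ω^2 * (n:ℝ)^2 ≠ 0 ∧
        (n:ℝ)^2 / ((k:ℝ)^2 + m - ω^2 * (n:ℝ)^2)^2 ≤ C ∧
        (k:ℝ)^2 / ((k:ℝ)^2 + m - ω^2 * (n:ℝ)^2)^2 ≤ C := by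
  have hK1 : 1 ≤ K := by omega
  have hceil : m ≤ (⌈m⌉₊:ℝ) := Nat.le_ceil m
  obtain ⟨N, hN2, hN1⟩ : ∃ N : ℕ, 2*((K:ℝ)^2 + m) ≤ (N:ℝ)^2 ∧ 1 ≤ N := by
    refine ⟨2*K + 2*⌈m⌉₊ + 2, ?_, by omega⟩
    have h0 : (0:ℝ) ≤ (K:ℝ) := Nat.cast_nonneg K
    have h1 : (0:ℝ) ≤ (⌈m⌉₊:ℝ) := Nat.cast_nonneg _
    have hc : ((2*K + 2*⌈m⌉₊ + 2 : ℕ) : ℝ) = 2*(K:ℝ) + 2*(⌈m⌉₊:ℝ) + 2 := by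
      push_cast; ring
    rw [hc]
    nlinarith [sq_nonneg ((K:ℝ) - (⌈m⌉₊:ℝ)), sq_nonneg ((⌈m⌉₊:ℝ))]
  -- the finite set of nonresonant low modes
  set T : Finset (ℤ × ℕ) :=
    (Finset.Icc (-(N:ℤ)) (N:ℤ) ×ˢ Finset.Icc 1 K).filter
      (fun q => ¬((q.1 = 1 ∧ q.2 = 1) ∨ (q.1 = -1 ∧ q.2 = 1))) with hTdef
  have hT0 : ((0:ℤ), (1:ℕ)) ∈ T := by
    simp [hTdef, Finset.mem_filter, Finset.mem_product, Finset.mem_Icc, hK1]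
  have hTne : T.Nonempty := ⟨_, hT0⟩
  -- the minimal distance δ
  obtain ⟨δ, hδpos, hδle⟩ : ∃ δ : ℝ, 0 < δ ∧
      ∀ q ∈ T, δ ≤ |((q.2:ℕ):ℝ)^2 + m - (1+m)*((q.1:ℤ):ℝ)^2| := by
    refine ⟨T.inf' hTne (fun q => |(q.2:ℝ)^2 + m - (1+m)*(q.1:ℝ)^2|), ?_,
      fun q hq => Finset.inf'_le _ hq⟩
    rw [Finset.lt_inf'_iff]
    rintro ⟨n, k⟩ hq
    rw [hTdef, Finset.mem_filter, Finset.mem_product, Finset.mem_Icc,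
      Finset.mem_Icc] at hq
    obtain ⟨⟨hn, ⟨hk1, hkK⟩⟩, hnk⟩ := hq
    simp only [abs_pos]
    intro h0
    by_cases hn1 : n = 1 ∨ n = -1
    · have hnsq : ((n:ℤ):ℝ)^2 = 1 := by rcases hn1 with h | h <;> simp [h]
      rw [hnsq] at h0
      have hksq : ((k:ℕ):ℝ)^2 = 1 := by linarith
      have hk : k = 1 := by
        have h2 : ((k^2 : ℕ) : ℝ) = ((1:ℕ):ℝ) := by push_cast; linarith
        have h3 := Nat.cast_injective h2
        nlinarith [h3]
      rcases hn1 with h | h <;> exact hnk (by simp [h, hk])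
    · push_neg at hn1
      have hnsq : ((n:ℤ):ℝ)^2 - 1 ≠ 0 := by
        intro h
        have hor : n = 1 ∨ n = -1 := by
          have h2 : ((n^2 : ℤ) : ℝ) = ((1:ℤ):ℝ) := by push_cast; linarith
          have h3 : n^2 = 1 := Int.cast_injective h2
          exact sq_eq_one_iff.mp h3
        tauto
      apply hmi
      refine ⟨((k^2 : ℤ) - n^2 : ℤ) / ((n^2 : ℤ) - 1 : ℤ), ?_⟩
      push_cast
      rw [div_eq_iff hnsq]
      linear_combination h0
  -- ε and C
  refine ⟨δ / (2*((N:ℝ)^2 + 1)), by positivity,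
    (((N:ℝ)^2 + (K:ℝ)^2 + 4) * (4/δ^2 + 4)), by positivity, ?_⟩
  intro ω hω1 hωε n k hk1 hkK hnk
  set D : ℝ := (k:ℝ)^2 + m - ω^2 * (n:ℝ)^2 with hDdef
  have hk0 : (0:ℝ) ≤ (k:ℝ) := Nat.cast_nonneg k
  have hN0 : (0:ℝ) ≤ (N:ℝ) := Nat.cast_nonneg N
  have hK0 : (0:ℝ) ≤ (K:ℝ) := Nat.cast_nonneg K
  have hδ2 : (0:ℝ) ≤ 4/δ^2 := by positivity
  have hkK' : (k:ℝ)^2 ≤ (K:ℝ)^2 := by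
    have h : (k:ℝ) ≤ (K:ℝ) := Nat.cast_le.mpr hkK
    nlinarith
  by_cases hn : n ∈ Finset.Icc (-(N:ℤ)) (N:ℤ)
  · -- low temporal frequency: use δ
    rw [Finset.mem_Icc] at hn
    have hnN : (n:ℝ)^2 ≤ (N:ℝ)^2 := by
      have h1 : (-(N:ℤ):ℝ) ≤ (n:ℝ) := by exact_mod_cast Int.cast_le.mpr hn.1
      have h2 : ((n:ℤ):ℝ) ≤ ((N:ℤ):ℝ) := by exact_mod_cast Int.cast_le.mpr hn.2
      push_cast at h1 h2
      nlinarith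
    have hmem : (n, k) ∈ T := by
      rw [hTdef, Finset.mem_filter, Finset.mem_product, Finset.mem_Icc,
        Finset.mem_Icc]
      exact ⟨⟨hn, hk1, hkK⟩, hnk⟩
    have hδle' : δ ≤ |(k:ℝ)^2 + m - (1+m)*(n:ℝ)^2| := hδle (n, k) hmem
    set D0 : ℝ := (k:ℝ)^2 + m - (1+m)*(n:ℝ)^2 with hD0def
    have hdiff : |D0 - D| ≤ (δ / (2*((N:ℝ)^2 + 1))) * (N:ℝ)^2 := by
      have heq : D0 - D = (ω^2 - (1+m)) * (n:ℝ)^2 := by rw [hD0def, hDdef]; ring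
      rw [heq, abs_mul, abs_of_nonneg (sq_nonneg (n:ℝ))]
      have h1 : |ω^2 - (1+m)| * (n:ℝ)^2 ≤ (δ / (2*((N:ℝ)^2 + 1))) * (n:ℝ)^2 :=
        mul_le_mul_of_nonneg_right hωε.le (sq_nonneg _)
      have h2 : (δ / (2*((N:ℝ)^2 + 1))) * (n:ℝ)^2 ≤
          (δ / (2*((N:ℝ)^2 + 1))) * (N:ℝ)^2 :=
        mul_le_mul_of_nonneg_left hnN (by positivity)
      linarith
    have hεN : (δ / (2*((N:ℝ)^2 + 1))) * (N:ℝ)^2 ≤ δ/2 := by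
      rw [div_mul_eq_mul_div, div_le_div_iff₀ (by positivity) (by norm_num)]
      nlinarith [sq_nonneg (N:ℝ)]
    have hDlow : δ/2 ≤ |D| := by
      have h1 : |D0| - |D| ≤ |D0 - D| := abs_sub_abs_le_abs_sub D0 D
      linarith
    have hD0' : D ≠ 0 := by
      intro h; rw [h, abs_zero] at hDlow; linarith
    refine ⟨hD0', ?_, ?_⟩
    · have h1 : (n:ℝ)^2 / D^2 ≤ (N:ℝ)^2 / (δ/2)^2 :=
        aux_div_sq_le (sq_nonneg _) hnN (by positivity) hDlow
      have h2 : (N:ℝ)^2 / (δ/2)^2 = (N:ℝ)^2 * (4/δ^2) := by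
        field_simp; ring
      rw [h2] at h1
      refine h1.trans ?_
      nlinarith [sq_nonneg (N:ℝ), sq_nonneg (K:ℝ)]
    · have h1 : (k:ℝ)^2 / D^2 ≤ (K:ℝ)^2 / (δ/2)^2 :=
        aux_div_sq_le (sq_nonneg _) hkK' (by positivity) hDlow
      have h2 : (K:ℝ)^2 / (δ/2)^2 = (K:ℝ)^2 * (4/δ^2) := by
        field_simp; ring
      rw [h2] at h1
      refine h1.trans ?_
      nlinarith [sq_nonneg (N:ℝ), sq_nonneg (K:ℝ)]
  · -- high temporal frequency: the denominator is large
    rw [Finset.mem_Icc, not_and_or, not_le, not_le] at hn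
    have hnbig : ((N:ℝ)+1)^2 ≤ (n:ℝ)^2 := by
      rcases hn with h | h
      · have h' : n ≤ -((N:ℤ)+1) := by omega
        have h2 : (n:ℝ) ≤ -(((N:ℤ):ℝ)+1) := by exact_mod_cast Int.cast_le.mpr h'
        push_cast at h2
        nlinarith
      · have h' : (N:ℤ)+1 ≤ n := by omega
        have h2 : (((N:ℤ):ℝ)+1) ≤ (n:ℝ) := by exact_mod_cast Int.cast_le.mpr h'
        push_cast at h2
        nlinarith
    have hn1 : (1:ℝ) ≤ (n:ℝ)^2 := by nlinarith
    have hDneg : D ≤ -((n:ℝ)^2/2) := by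
      have h1 : (n:ℝ)^2 ≤ ω^2 * (n:ℝ)^2 := by nlinarith [sq_nonneg (n:ℝ)]
      have h2 : 2*((K:ℝ)^2 + m) ≤ (n:ℝ)^2 := by nlinarith
      rw [hDdef]
      nlinarith
    have hDlow : (n:ℝ)^2/2 ≤ |D| := by
      have h1 : (n:ℝ)^2/2 ≤ -D := by linarith
      calc (n:ℝ)^2/2 ≤ -D := h1
        _ ≤ |D| := neg_le_abs D
    have hD0' : D ≠ 0 := by
      intro h; rw [h, abs_zero] at hDlow; nlinarith
    refine ⟨hD0', ?_, ?_⟩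
    · have h1 : (n:ℝ)^2 / D^2 ≤ (n:ℝ)^2 / ((n:ℝ)^2/2)^2 :=
        aux_div_sq_le (sq_nonneg _) le_rfl (by nlinarith) hDlow
      have h2 : (n:ℝ)^2 / ((n:ℝ)^2/2)^2 = 4/(n:ℝ)^2 := by
        have hne : (n:ℝ)^2 ≠ 0 := by nlinarith
        field_simp
        ring
      rw [h2] at h1
      have h3 : 4/(n:ℝ)^2 ≤ 4 := by
        rw [div_le_iff₀ (by nlinarith)]; nlinarith
      refine h1.trans (h3.trans ?_)
      nlinarith [sq_nonneg (N:ℝ), sq_nonneg (K:ℝ)]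
    · have h1 : (k:ℝ)^2 / D^2 ≤ (K:ℝ)^2 / ((n:ℝ)^2/2)^2 :=
        aux_div_sq_le (sq_nonneg _) hkK' (by nlinarith) hDlow
      have h3 : (K:ℝ)^2 / ((n:ℝ)^2/2)^2 ≤ 4*(K:ℝ)^2 := by
        have hge : ((n:ℝ)^2/2)^2 ≥ 1/4 := by nlinarith
        rw [div_le_iff₀ (by nlinarith)]
        nlinarith [sq_nonneg (K:ℝ)]
      refine h1.trans (h3.trans ?_)
      nlinarith [sq_nonneg (N:ℝ), sq_nonneg (K:ℝ)]
end
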